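/- arXiv:1602.06738 — 3 statements merged into one kernel-verified Lean document; each statement's English description precedes it below -/
import Mathlib

section
/- Let μ = ⨂_{k=1}^∞ μ_k be a product probability measure on ℝ^∞ = ∏_k ℝ^{m_k}, 𝔅_n the σ-algebra generated by the first n blocks of coordinates, and f ∈ L¹(μ) a linear functional. Then μ-a.e. one has (E^{𝔅_n}f)(x) = f(x_1,...,x_{m̃_n},0,0,...) + c_n, where c_n = ∫ f(0,...,0,y) d(⨂_{k>n} μ_k)(y); in particular E^{𝔅_n}f is an affine function of the first m̃_n coordinates. -/
/-!
Splicing the first `n` blocks of one `μ`-distributed point with the tail of an independent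
`μ`-distributed point gives again a `μ`-distributed point: both `μ` and the pushforward of
`μ ⊗ μ` are product measures of the `μs k`, and a product measure is determined by its values on
cylinders. Conditioning on the first `n` blocks therefore amounts to integrating out the second
copy, `E^{𝔅_n} f (x) = ∫ f (x_{<n}, y_{≥n}) dμ(y)`. For additive `f` the integrand splits as
`f (x_{<n}, 0) + f (0, y_{≥n})`, and the second summand integrates to `cₙ`.
-/

open MeasureTheory Set Filter Topology Pointwise ENNReal

/-- `μ` is the countable product of the probability measures `μs k`:
it assigns the product value to every finite-dimensional cylinder. -/
def IsProductMeasure {E : ℕ → Type*} [∀ k, MeasurableSpace (E k)]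
    (μs : ∀ k, Measure (E k)) (μ : Measure (∀ k, E k)) : Prop :=
  ∀ (n : ℕ) (s : ∀ k, Set (E k)), (∀ k, MeasurableSet (s k)) →
    μ {x | ∀ k < n, x k ∈ s k} = ∏ k ∈ Finset.range n, μs k (s k)

/-- The σ-algebra generated by the first `n` coordinate blocks of `∏_k ℝ^{m_k}`. -/
def coordSA (m : ℕ → ℕ) (n : ℕ) : MeasurableSpace (∀ k, Fin (m k) → ℝ) :=
  MeasurableSpace.comap (fun x (i : Fin n) => x i) inferInstance

section ExtendPrefix

variable {E : ℕ → Type*} {n : ℕ}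

def extendPrefix (n : ℕ) (b : ∀ i : Fin n, E i) (y : ∀ k, E k) : ∀ k, E k :=
  fun k => if h : k < n then b ⟨k, h⟩ else y k

lemma extendPrefix_restrict (x y : ∀ k, E k) :
    extendPrefix n (fun i : Fin n => x i) y = fun k => if k < n then x k else y k := by
  ext k; by_cases h : k < n <;> simp [extendPrefix, h]

lemma restrict_extendPrefix (b : ∀ i : Fin n, E i) (y : ∀ k, E k) :
    (fun i : Fin n => extendPrefix n b y i) = b := by
  ext i; simp [extendPrefix]

variable [∀ k, MeasurableSpace (E k)]

lemma measurable_extendPrefix : Measurable (Function.uncurry (extendPrefix (E := E) n)) := by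
  refine measurable_pi_lambda _ fun k => ?_
  by_cases h : k < n
  · simp only [Function.uncurry, extendPrefix, h, dif_pos]
    exact (measurable_pi_apply (⟨k, h⟩ : Fin n)).comp measurable_fst
  · simp only [Function.uncurry, extendPrefix, h, dif_neg, not_false_iff]
    exact (measurable_pi_apply k).comp measurable_snd

lemma measurable_restrict_fin : Measurable fun (x : ∀ k, E k) (i : Fin n) => x i :=
  measurable_pi_lambda _ fun _ => measurable_pi_apply _

lemma measurable_extendPrefix_restrict :
    Measurable fun p : (∀ k, E k) × (∀ k, E k) => extendPrefix n (fun i : Fin n => p.1 i) p.2 :=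
  measurable_extendPrefix.comp ((measurable_restrict_fin.comp measurable_fst).prodMk measurable_snd)

end ExtendPrefix

namespace IsProductMeasure

variable {E : ℕ → Type*} [∀ k, MeasurableSpace (E k)] {μs : ∀ k, Measure (E k)}
  {μ ν : Measure (∀ k, E k)}

lemma measure_univ (hμ : IsProductMeasure μs μ) : μ univ = 1 := by
  simpa using hμ 0 (fun _ => univ) fun _ => .univ

lemma isProbabilityMeasure (hμ : IsProductMeasure μs μ) : IsProbabilityMeasure μ :=
  ⟨hμ.measure_univ⟩

lemma eq_of_mem_squareCylinders (hμ : IsProductMeasure μs μ) (hν : IsProductMeasure μs ν)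
    {S : Set (∀ k, E k)} (hS : S ∈ squareCylinders fun k => {s : Set (E k) | MeasurableSet s}) :
    μ S = ν S := by
  classical
  obtain ⟨I, t, ht, rfl⟩ := hS
  obtain ⟨N, hN⟩ := I.exists_nat_subset_range
  set t' : ∀ k, Set (E k) := fun k => if k ∈ I then t k else univ
  have hbox : (I : Set ℕ).pi t = {x | ∀ k < N, x k ∈ t' k} := by
    ext x
    simp only [Set.mem_pi, Finset.mem_coe, mem_ofPred_eq, t']
    refine ⟨fun hx k _ => ?_, fun hx k hk => ?_⟩
    · split_ifs with hk
      exacts [hx k hk, mem_univ _]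
    · simpa [hk] using hx k (Finset.mem_range.mp (hN hk))
  have hmeas : ∀ k, MeasurableSet (t' k) := fun k => by
    by_cases hk : k ∈ I
    · simpa [t', hk] using ht k (mem_univ k)
    · simp [t', hk]
  rw [hbox, hμ N _ hmeas, hν N _ hmeas]

lemma ext (hμ : IsProductMeasure μs μ) (hν : IsProductMeasure μs ν) : μ = ν := by
  have := hμ.isProbabilityMeasure
  exact ext_of_generate_finite _ generateFrom_squareCylinders.symm
    (isPiSystem_squareCylinders (fun _ => MeasurableSpace.isPiSystem_measurableSet) fun _ => .univ)
    (fun _ hS => hμ.eq_of_mem_squareCylinders hν hS) (by rw [hμ.measure_univ, hν.measure_univ])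

lemma map_extendPrefix (hμ : IsProductMeasure μs μ) (hprob : ∀ k, IsProbabilityMeasure (μs k))
    (n : ℕ) :
    IsProductMeasure μs ((μ.prod μ).map fun p => extendPrefix n (fun i : Fin n => p.1 i) p.2) := by
  have := hμ.isProbabilityMeasure
  intro N s hs
  set s₁ : ∀ k, Set (E k) := fun k => if k < n then s k else univ
  set s₂ : ∀ k, Set (E k) := fun k => if k < n then univ else s k
  have hs₁ : ∀ k, MeasurableSet (s₁ k) := fun k => by by_cases h : k < n <;> simp [s₁, h, hs k]
  have hs₂ : ∀ k, MeasurableSet (s₂ k) := fun k => by by_cases h : k < n <;> simp [s₂, h, hs k]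
  have hpre : (fun p : (∀ k, E k) × (∀ k, E k) => extendPrefix n (fun i : Fin n => p.1 i) p.2) ⁻¹'
      {x | ∀ k < N, x k ∈ s k} = {x | ∀ k < N, x k ∈ s₁ k} ×ˢ {y | ∀ k < N, y k ∈ s₂ k} := by
    ext ⟨x, y⟩
    have key : ∀ k, (if k < n then x k else y k) ∈ s k ↔ x k ∈ s₁ k ∧ y k ∈ s₂ k := fun k => by
      by_cases hkn : k < n <;> simp [s₁, s₂, hkn]
    simp only [extendPrefix_restrict, mem_preimage, mem_prod, mem_ofPred_eq, key, forall₂_and]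
  have hbox : MeasurableSet {x : ∀ k, E k | ∀ k < N, x k ∈ s k} := by
    simpa [Set.pi] using MeasurableSet.pi (Finset.range N).countable_toSet fun k _ => hs k
  rw [Measure.map_apply measurable_extendPrefix_restrict hbox, hpre,
    Measure.prod_prod, hμ N s₁ hs₁, hμ N s₂ hs₂, ← Finset.prod_mul_distrib]
  refine Finset.prod_congr rfl fun k _ => ?_
  by_cases hkn : k < n <;> simp [s₁, s₂, hkn]

end IsProductMeasure

theorem condExp_comap_ae_eq_integral {Ω β F : Type*} [MeasurableSpace Ω] [mβ : MeasurableSpace β]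
    [NormedAddCommGroup F] [NormedSpace ℝ F] [CompleteSpace F]
    {μ : Measure Ω} [IsFiniteMeasure μ] {π : Ω → β} {G : β → Ω → Ω}
    (hπ : Measurable π) (hG : Measurable (Function.uncurry G)) (hπG : ∀ b y, π (G b y) = b)
    (hmap : (μ.prod μ).map (fun p => G (π p.1) p.2) = μ) {f : Ω → F} (hf : Integrable f μ) :
    μ[f | mβ.comap π] =ᵐ[μ] fun x => ∫ y, f (G (π x) y) ∂μ := by
  set T : Ω × Ω → Ω := fun p => G (π p.1) p.2
  have hT : Measurable T := hG.comp ((hπ.comp measurable_fst).prodMk measurable_snd)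
  have hf_map : Integrable f ((μ.prod μ).map T) := by rwa [hmap]
  have hfT : Integrable (fun p => f (T p)) (μ.prod μ) := hf_map.comp_measurable hT
  refine (ae_eq_condExp_of_forall_setIntegral_eq hπ.comap_le hf
    (fun s _ _ => hfT.integral_prod_left.integrableOn) ?_ ?_).symm
  · rintro _ ⟨t, ht, rfl⟩ -
    have hpre : T ⁻¹' (π ⁻¹' t) = (π ⁻¹' t) ×ˢ univ := by
      ext p; simp [T, hπG]
    calc ∫ x in π ⁻¹' t, ∫ y, f (T (x, y)) ∂μ ∂μ
        = ∫ p in (π ⁻¹' t) ×ˢ univ, f (T p) ∂(μ.prod μ) := by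
          rw [setIntegral_prod _ hfT.integrableOn, Measure.restrict_univ]
      _ = ∫ x in π ⁻¹' t, f x ∂((μ.prod μ).map T) := by
          rw [setIntegral_map (hπ ht) hf_map.aestronglyMeasurable hT.aemeasurable, hpre]
      _ = ∫ x in π ⁻¹' t, f x ∂μ := by rw [hmap]
  · set f' := hf.aestronglyMeasurable.mk f
    have hfT_ae : ∀ᵐ p ∂(μ.prod μ), f (T p) = f' (T p) :=
      ae_of_ae_map hT.aemeasurable (by rw [hmap]; exact hf.aestronglyMeasurable.ae_eq_mk)
    refine ⟨fun x => ∫ y, f' (G (π x) y) ∂μ,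
      ((hf.aestronglyMeasurable.stronglyMeasurable_mk.comp_measurable hG).integral_prod_right'
        ).comp_measurable (comap_measurable π), ?_⟩
    filter_upwards [Measure.ae_ae_of_ae_prod hfT_ae] with x hx
    exact integral_congr_ae hx

theorem stmt6_general (m : ℕ → ℕ) (μs : ∀ k, Measure (Fin (m k) → ℝ))
    (hprob : ∀ k, IsProbabilityMeasure (μs k))
    (μ : Measure (∀ k, Fin (m k) → ℝ)) [IsProbabilityMeasure μ]
    (hμ : IsProductMeasure μs μ)
    (f : (∀ k, Fin (m k) → ℝ) → ℝ)
    (hadd : ∀ x y, f (x + y) = f x + f y)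
    (hf : Integrable f μ) (n : ℕ) :
    μ[f | coordSA m n] =ᵐ[μ]
      fun x => f (fun k => if k < n then x k else 0) +
        ∫ y, f (fun k => if k < n then 0 else y k) ∂μ := by
  have hmap := (hμ.map_extendPrefix hprob n).ext hμ
  have hsplit : ∀ x y : ∀ k, Fin (m k) → ℝ, f (extendPrefix n (fun i : Fin n => x i) y) =
      f (fun k => if k < n then x k else 0) + f (fun k => if k < n then 0 else y k) := by
    intro x y
    rw [← hadd, extendPrefix_restrict]
    congr 1; ext k; by_cases h : k < n <;> simp [h]
  have hsection : ∀ᵐ x ∂μ, Integrable (fun y => f (extendPrefix n (fun i : Fin n => x i) y)) μ :=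
    ((by rwa [hmap] : Integrable f _).comp_measurable measurable_extendPrefix_restrict).prod_right_ae
  filter_upwards [condExp_comap_ae_eq_integral measurable_restrict_fin measurable_extendPrefix
    restrict_extendPrefix hmap hf, hsection] with x hx hx_int
  simp only [hsplit, integrable_const_add_iff] at hx hx_int
  refine hx.trans ?_
  rw [integral_add (integrable_const _) hx_int, integral_const, probReal_univ, one_smul]

/-- For a μ-integrable linear functional `f`, the conditional expectation with
respect to the first `n` coordinate blocks is the affine function
`x ↦ f(x₁,…,x_{m̃ₙ},0,…) + cₙ`, where `cₙ` is the integral of `f` over the tail. -/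
theorem stmt6 (m : ℕ → ℕ) (μs : ∀ k, Measure (Fin (m k) → ℝ))
    (hprob : ∀ k, IsProbabilityMeasure (μs k))
    (μ : Measure (∀ k, Fin (m k) → ℝ)) [IsProbabilityMeasure μ]
    (hμ : IsProductMeasure μs μ)
    (f : (∀ k, Fin (m k) → ℝ) → ℝ)
    (hadd : ∀ x y, f (x + y) = f x + f y)
    (hsmul : ∀ (c : ℝ) (x), f (c • x) = c * f x)
    (hf : Integrable f μ) (n : ℕ) :
    μ[f | coordSA m n] =ᵐ[μ]
      fun x => f (fun k => if k < n then x k else 0) +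
        ∫ y, f (fun k => if k < n then 0 else y k) ∂μ :=
  stmt6_general m μs hprob μ hμ f hadd hf n
end

section
/- Let μ = ⨂_{k=1}^∞ μ_k be a product of symmetric (μ_k(-A) = μ_k(A)) probability measures on ℝ^{m_k} and let f be a μ-integrable linear functional on ℝ^∞. Then the conditional expectation of f with respect to the σ-algebra of the first m̃_n coordinates equals x ↦ f(x_1,...,x_{m̃_n},0,0,...) μ-a.e.; in particular the tail-integral constant c_n = ∫ f(0,...,0,y) d(⨂_{k>n}μ_k)(y) vanishes for every n. -/
open MeasureTheory Set Filter Topology Pointwise ENNReal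

/-!
Let `T` flip the sign of every block from index `n` on. By symmetry of the factors `T` preserves
the product measure, and it fixes every set that depends only on the first `n` blocks. Additivity
gives `f (x_{<n}, 0) = (f x + f (T x)) / 2`, so `x ↦ f (x_{<n}, 0)` and `f` have the same integral
over such sets, and `∫ f (0, y_{≥n}) = ∫ f - ∫ f (x_{<n}, 0) = 0`.

Since `f` is only a.e. strongly measurable, the measurability of `x ↦ f (x_{<n}, 0)` with
respect to the first `n` blocks needs a Fubini argument: `μ` is the image of `μ ⊗ μ` under
gluing the head of one point to the tail of another, and freezing a generic tail `y` turns
`f (x_{<n}, y_{≥n}) - f (0, y_{≥n})` into a version of `f (x_{<n}, 0)`.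
-/

namespace BlockProduct

variable {E : ℕ → Type*}

-- The tail is taken from `p.1` so that `Measure.ae_ae_of_ae_prod` lets us freeze the tail.
def glue (n : ℕ) (p : (∀ k, E k) × (∀ k, E k)) : ∀ k, E k :=
  fun k => if k < n then p.2 k else p.1 k

-- `coordSA m n` is the case `E k = Fin (m k) → ℝ`.
variable (E) in
def headSA [∀ k, MeasurableSpace (E k)] (n : ℕ) : MeasurableSpace (∀ k, E k) :=
  MeasurableSpace.comap (fun x (i : Fin n) => x i) inferInstance

section Blocks

variable [∀ k, AddCommGroup (E k)] (n : ℕ)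

def headProj (x : ∀ k, E k) : ∀ k, E k := fun k => if k < n then x k else 0

def tailProj (x : ∀ k, E k) : ∀ k, E k := fun k => if k < n then 0 else x k

def tailNeg (x : ∀ k, E k) : ∀ k, E k := fun k => if k < n then x k else -x k

lemma headProj_add_tailProj (x : ∀ k, E k) : headProj n x + tailProj n x = x := by
  ext k; by_cases h : k < n <;> simp [headProj, tailProj, h]

lemma headProj_sub_tailProj (x : ∀ k, E k) : headProj n x - tailProj n x = tailNeg n x := by
  ext k; by_cases h : k < n <;> simp [headProj, tailProj, tailNeg, h]

lemma glue_eq_headProj_add_tailProj (p : (∀ k, E k) × (∀ k, E k)) :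
    glue n p = headProj n p.2 + tailProj n p.1 := by
  ext k; by_cases h : k < n <;> simp [glue, headProj, tailProj, h]

lemma tailNeg_involutive : Function.Involutive (tailNeg (E := E) n) := by
  intro x; ext k; by_cases h : k < n <;> simp [tailNeg, h]

lemma restrict_comp_tailNeg :
    (fun (x : ∀ k, E k) (i : Fin n) => x i) ∘ tailNeg n = fun x i => x i := by
  ext x i; simp [tailNeg, i.isLt]

lemma map_headProj_eq_average (f : (∀ k, E k) →+ ℝ) (x : ∀ k, E k) :
    f (headProj n x) = (f x + f (tailNeg n x)) / 2 := by
  rw [← headProj_sub_tailProj, map_sub]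
  nth_rw 2 [← headProj_add_tailProj n x]
  rw [map_add]
  ring

end Blocks

section Measurability

variable [∀ k, MeasurableSpace (E k)]

lemma measurable_glue (n : ℕ) : Measurable (glue (E := E) n) := by
  refine measurable_pi_lambda _ fun k => ?_
  by_cases h : k < n <;> simp only [glue, h, if_true, if_false]
  exacts [(measurable_pi_apply k).comp measurable_snd, (measurable_pi_apply k).comp measurable_fst]

lemma measurable_tailNeg [∀ k, AddCommGroup (E k)] [∀ k, MeasurableNeg (E k)] (n : ℕ) :
    Measurable (tailNeg (E := E) n) := by
  refine measurable_pi_lambda _ fun k => ?_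
  by_cases h : k < n <;> simp only [tailNeg, h, if_true, if_false]
  exacts [measurable_pi_apply k, (measurable_pi_apply k).neg]

variable {n : ℕ}

lemma headSA_le : headSA E n ≤ MeasurableSpace.pi :=
  (measurable_pi_lambda _ fun _ => measurable_pi_apply _).comap_le

lemma measurable_glue_headSA (y : ∀ k, E k) : Measurable[headSA E n] fun x => glue n (y, x) := by
  have hext :
      Measurable fun (v : ∀ i : Fin n, E i) k => if h : k < n then v ⟨k, h⟩ else y k := by
    refine measurable_pi_lambda _ fun k => ?_
    by_cases h : k < n <;> simp only [h, dif_pos, dif_neg, not_false_eq_true]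
    exacts [measurable_pi_apply _, measurable_const]
  exact hext.comp (comap_measurable _)

lemma tailNeg_preimage_eq [∀ k, AddCommGroup (E k)] {s : Set (∀ k, E k)}
    (hs : MeasurableSet[headSA E n] s) : tailNeg n ⁻¹' s = s := by
  obtain ⟨A, -, rfl⟩ := hs
  rw [← preimage_comp, restrict_comp_tailNeg]

end Measurability

section ProductMeasure

variable [∀ k, MeasurableSpace (E k)] {μs : ∀ k, Measure (E k)}
  [∀ k, IsProbabilityMeasure (μs k)]

theorem IsProductMeasure.eq_infinitePi {μ : Measure (∀ k, E k)} (hμ : IsProductMeasure μs μ) :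
    μ = Measure.infinitePi μs := by
  classical
  refine Measure.eq_infinitePi μs fun s t ht => ?_
  obtain ⟨N, hsN⟩ := Finset.exists_nat_subset_range s
  have hcyl :
      {x : ∀ k, E k | ∀ k < N, x k ∈ if k ∈ s then t k else univ} = (s : Set ℕ).pi t := by
    ext x
    simp only [Set.mem_pi, Finset.mem_coe]
    refine ⟨fun hx k hk => by simpa [hk] using hx k (Finset.mem_range.mp (hsN hk)),
      fun hx k _ => ?_⟩
    split_ifs with hk
    exacts [hx k hk, trivial]
  rw [← hcyl, hμ N _ fun k => by split_ifs; exacts [ht k, .univ]]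
  simp_rw [apply_ite (μs _), measure_univ]
  rw [Finset.prod_ite_mem, Finset.inter_eq_right.mpr hsN]

theorem infinitePi_map_tailNeg [∀ k, AddCommGroup (E k)] [∀ k, MeasurableNeg (E k)]
    (hsym : ∀ k, (μs k).map (fun v => -v) = μs k) (n : ℕ) :
    (Measure.infinitePi μs).map (tailNeg n) = Measure.infinitePi μs := by
  have hT : tailNeg (E := E) n = fun x k => (if k < n then id else Neg.neg) (x k) := by
    ext x k; by_cases h : k < n <;> simp [tailNeg, h]
  rw [hT, Measure.infinitePi_map_pi _ fun k => by split_ifs; exacts [measurable_id, measurable_neg]]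
  congr with k : 1
  split_ifs
  exacts [Measure.map_id, hsym k]

theorem infinitePi_prod_map_glue (n : ℕ) :
    ((Measure.infinitePi μs).prod (Measure.infinitePi μs)).map (glue n) =
      Measure.infinitePi μs := by
  classical
  refine Measure.eq_infinitePi μs fun s t ht => ?_
  set tHead : ∀ k, Set (E k) := fun k => if k < n then t k else univ
  set tTail : ∀ k, Set (E k) := fun k => if k < n then univ else t k
  have hpre :
      glue n ⁻¹' (s : Set ℕ).pi t = (s : Set ℕ).pi tTail ×ˢ (s : Set ℕ).pi tHead := by
    ext p
    simp only [mem_preimage, Set.mem_pi, mem_prod, glue, tHead, tTail]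
    constructor
    · intro h
      refine ⟨fun k hk => ?_, fun k hk => ?_⟩ <;> split_ifs with hkn <;>
        first | trivial | simpa [hkn] using h k hk
    · rintro ⟨h₁, h₂⟩ k hk
      split_ifs with hkn
      · simpa [hkn] using h₂ k hk
      · simpa [hkn] using h₁ k hk
  have hmeas : ∀ (u : ∀ k, Set (E k)), (∀ k, MeasurableSet (u k)) →
      MeasurableSet ((s : Set ℕ).pi u) := fun u hu => .pi s.countable_toSet fun k _ => hu k
  rw [Measure.map_apply (measurable_glue n) (hmeas t ht), hpre, Measure.prod_prod,
    Measure.infinitePi_pi _ fun k _ => ?_, Measure.infinitePi_pi _ fun k _ => ?_,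
    ← Finset.prod_mul_distrib]
  · refine Finset.prod_congr rfl fun k _ => ?_
    by_cases h : k < n <;> simp [tHead, tTail, h]
  · simp only [tHead]; split_ifs; exacts [ht k, .univ]
  · simp only [tTail]; split_ifs; exacts [.univ, ht k]

end ProductMeasure

section ConditionalExpectation

variable [∀ k, MeasurableSpace (E k)] [∀ k, AddCommGroup (E k)] {n : ℕ}
  {μ : Measure (∀ k, E k)} {f : (∀ k, E k) →+ ℝ}

lemma aestronglyMeasurable_comp_headProj [IsProbabilityMeasure μ]
    (hglue : MeasurePreserving (glue n) (μ.prod μ) μ) (hf : AEStronglyMeasurable f μ) :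
    AEStronglyMeasurable[headSA E n] (f ∘ headProj n) μ := by
  obtain ⟨f', hf'sm, hff'⟩ := hf
  have hglue_ae : ∀ᵐ p ∂μ.prod μ, f (glue n p) = f' (glue n p) :=
    hglue.quasiMeasurePreserving.ae hff'
  obtain ⟨y, hy⟩ := (Measure.ae_ae_of_ae_prod hglue_ae).exists
  refine ⟨fun x => f' (glue n (y, x)) - f (tailProj n y),
    (hf'sm.comp_measurable (measurable_glue_headSA y)).sub stronglyMeasurable_const, ?_⟩
  filter_upwards [hy] with x hx
  show f (headProj n x) = f' (glue n (y, x)) - f (tailProj n y)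
  rw [← hx, glue_eq_headProj_add_tailProj, map_add, add_sub_cancel_right]

lemma integrable_comp_headProj (hT : MeasurePreserving (tailNeg n) μ μ) (hf : Integrable f μ) :
    Integrable (fun x => f (headProj n x)) μ :=
  ((hf.add (hT.integrable_comp_of_integrable hf)).div_const 2).congr
    (ae_of_all _ fun x => (map_headProj_eq_average n f x).symm)

variable [∀ k, MeasurableNeg (E k)]

lemma setIntegral_comp_headProj (hT : MeasurePreserving (tailNeg n) μ μ) (hf : Integrable f μ)
    {s : Set (∀ k, E k)} (hs : MeasurableSet[headSA E n] s) :
    ∫ x in s, f (headProj n x) ∂μ = ∫ x in s, f x ∂μ := by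
  have hemb : MeasurableEmbedding (tailNeg (E := E) n) :=
    (MeasurableEquiv.ofInvolutive _ (tailNeg_involutive n)
      (measurable_tailNeg n)).measurableEmbedding
  have hTs : ∫ x in s, f (tailNeg n x) ∂μ = ∫ x in s, f x ∂μ := by
    simpa only [tailNeg_preimage_eq hs] using hT.setIntegral_preimage_emb hemb f s
  have hfT : Integrable (fun x => f (tailNeg n x)) μ := hT.integrable_comp_of_integrable hf
  simp_rw [map_headProj_eq_average]
  rw [integral_div, integral_add hf.integrableOn hfT.integrableOn, hTs]
  ring

theorem condExp_headSA_ae_eq [IsProbabilityMeasure μ] (hT : MeasurePreserving (tailNeg n) μ μ)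
    (hglue : MeasurePreserving (glue n) (μ.prod μ) μ) (hf : Integrable f μ) :
    μ[f | headSA E n] =ᵐ[μ] f ∘ headProj n :=
  (ae_eq_condExp_of_forall_setIntegral_eq headSA_le hf
    (fun _ _ _ => (integrable_comp_headProj hT hf).integrableOn)
    (fun _ hs _ => setIntegral_comp_headProj hT hf hs)
    (aestronglyMeasurable_comp_headProj hglue hf.1)).symm

theorem integral_comp_tailProj (hT : MeasurePreserving (tailNeg n) μ μ) (hf : Integrable f μ) :
    ∫ x, f (tailProj n x) ∂μ = 0 := by
  have hint := setIntegral_comp_headProj hT hf (MeasurableSet.univ (m := headSA E n))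
  rw [setIntegral_univ, setIntegral_univ] at hint
  have hsplit : ∀ x, f (tailProj n x) = f x - f (headProj n x) := fun x => by
    rw [eq_sub_iff_add_eq', ← map_add, headProj_add_tailProj]
  simp_rw [hsplit]
  rw [integral_sub hf (integrable_comp_headProj hT hf), hint, sub_self]

end ConditionalExpectation

end BlockProduct

open BlockProduct

theorem stmt14_general (m : ℕ → ℕ) (μs : ∀ k, Measure (Fin (m k) → ℝ))
    (hprob : ∀ k, IsProbabilityMeasure (μs k))
    (hsym : ∀ k, (μs k).map (fun v => -v) = μs k)
    (μ : Measure (∀ k, Fin (m k) → ℝ))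
    (hμ : IsProductMeasure μs μ)
    (f : (∀ k, Fin (m k) → ℝ) → ℝ)
    (hadd : ∀ x y, f (x + y) = f x + f y)
    (hf : Integrable f μ) :
    (∀ n, μ[f | coordSA m n] =ᵐ[μ] fun x => f (fun k => if k < n then x k else 0)) ∧
    (∀ n, (∫ y, f (fun k => if k < n then 0 else y k) ∂μ) = 0) := by
  have := hprob
  have hμ' := hμ.eq_infinitePi
  have : IsProbabilityMeasure μ := hμ' ▸ inferInstance
  have hT n : MeasurePreserving (tailNeg n) μ μ :=
    ⟨measurable_tailNeg n, by rw [hμ']; exact infinitePi_map_tailNeg hsym n⟩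
  have hglue n : MeasurePreserving (glue n) (μ.prod μ) μ :=
    ⟨measurable_glue n, by rw [hμ']; exact infinitePi_prod_map_glue n⟩
  let F : (∀ k, Fin (m k) → ℝ) →+ ℝ := AddMonoidHom.mk' f hadd
  exact ⟨fun n => condExp_headSA_ae_eq (f := F) (hT n) (hglue n) hf,
    fun n => integral_comp_tailProj (f := F) (hT n) hf⟩

/-- For a product of symmetric measures, the conditional expectation of an integrable
linear functional with respect to the first `n` coordinate blocks is
`x ↦ f(x₁,…,x_{m̃ₙ},0,…)`; in particular all the tail constants `cₙ` vanish. -/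
theorem stmt14 (m : ℕ → ℕ) (μs : ∀ k, Measure (Fin (m k) → ℝ))
    (hprob : ∀ k, IsProbabilityMeasure (μs k))
    (hsym : ∀ k, (μs k).map (fun v => -v) = μs k)
    (μ : Measure (∀ k, Fin (m k) → ℝ)) [IsProbabilityMeasure μ]
    (hμ : IsProductMeasure μs μ)
    (f : (∀ k, Fin (m k) → ℝ) → ℝ)
    (hadd : ∀ x y, f (x + y) = f x + f y)
    (hsmul : ∀ (c : ℝ) (x), f (c • x) = c * f x)
    (hf : Integrable f μ) :
    (∀ n, μ[f | coordSA m n] =ᵐ[μ] fun x => f (fun k => if k < n then x k else 0)) ∧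
    (∀ n, (∫ y, f (fun k => if k < n then 0 else y k) ∂μ) = 0) :=
  stmt14_general m μs hprob hsym μ hμ f hadd hf
end

section
/- Let μ = ⨂_{k=1}^∞ μ_k be a product probability measure on ℝ^∞ and f a μ-integrable measurable linear functional such that the sequence c_n = ∫ f(0,...,0,y) d(⨂_{k>n} μ_k)(y) tends to 0 as n → ∞. Then the finite-dimensional linear functionals g_n(x) = f(x_1,...,x_{m̃_n},0,0,...) converge to f μ-almost everywhere; hence f is a μ-a.e. limit of continuous linear functionals. -/
open MeasureTheory Set Filter Topology Pointwise ENNReal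

/-!
Write `x = (x_{<n}, x_{≥n})`. Since `μ` is a product measure, it is the image of `μ ⊗ μ` under
`(x, y) ↦ (x_{<n}, y_{≥n})`, so by Fubini `E[f | x_{<n}] = ∫ f(x_{<n}, y_{≥n}) dμ(y)`. For additive
`f` this is `gₙ(x) + cₙ`. Lévy's upward theorem gives `E[f | x_{<n}] → f` a.e., and `cₙ → 0`.
-/

theorem IsProductMeasure.eq_infinitePi {E : ℕ → Type*} [∀ k, MeasurableSpace (E k)]
    {μs : ∀ k, Measure (E k)} [∀ k, IsProbabilityMeasure (μs k)] {μ : Measure (∀ k, E k)}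
    (hμ : IsProductMeasure μs μ) : μ = Measure.infinitePi μs := by
  refine Measure.eq_infinitePi μs fun s t ht => ?_
  obtain ⟨n, hsn⟩ := s.exists_nat_subset_range
  have hbox : Set.pi (s : Set ℕ) t = {x | ∀ k < n, x k ∈ s.piecewise t (fun _ => univ) k} := by
    ext x
    simp only [Set.mem_pi, Finset.mem_coe, mem_ofPred_eq]
    refine ⟨fun hx k _ => ?_, fun hx k hk => ?_⟩
    · by_cases hk : k ∈ s <;> simp [hk, hx]
    · simpa [hk] using hx k (Finset.mem_range.mp (hsn hk))
  rw [hbox, hμ n _ fun k => by by_cases hk : k ∈ s <;> simp [hk, ht k],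
    ← Finset.prod_subset hsn fun k _ hk => by simp [hk]]
  exact Finset.prod_congr rfl fun k hk => by simp [hk]

lemma Finset.range_piecewise {X : ℕ → Type*} (n : ℕ) (x y : Π k, X k) :
    (Finset.range n).piecewise x y = fun k => if k < n then x k else y k := by
  ext k
  simp [Finset.piecewise]

section Piecewise

variable {ι : Type*} [DecidableEq ι] {X : ι → Type*} [∀ i, MeasurableSpace (X i)]
  (μ : ∀ i, Measure (X i)) [∀ i, IsProbabilityMeasure (μ i)] (s : Finset ι)

lemma measurable_piecewise_prod :
    Measurable fun p : (Π i, X i) × (Π i, X i) => s.piecewise p.1 p.2 :=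
  measurable_pi_lambda _ fun i => by
    by_cases hi : i ∈ s <;>
      simp only [hi, Finset.piecewise_eq_of_mem, Finset.piecewise_eq_of_notMem,
        not_false_eq_true] <;>
      fun_prop

theorem MeasureTheory.Measure.measurePreserving_piecewise_infinitePi :
    MeasurePreserving (fun p : (Π i, X i) × (Π i, X i) => s.piecewise p.1 p.2)
      ((infinitePi μ).prod (infinitePi μ)) (infinitePi μ) := by
  refine ⟨measurable_piecewise_prod s, eq_infinitePi μ fun t u hu => ?_⟩
  have hbox : (fun p : (Π i, X i) × (Π i, X i) => s.piecewise p.1 p.2) ⁻¹' Set.pi (t : Set ι) u =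
      Set.pi ↑(t ∩ s) u ×ˢ Set.pi ↑(t \ s) u := by
    ext ⟨x, y⟩
    simp only [mem_preimage, Set.mem_pi, Finset.mem_coe, mem_prod, Finset.mem_inter,
      Finset.mem_sdiff]
    refine ⟨fun h => ⟨fun i hi => ?_, fun i hi => ?_⟩, fun h i hi => ?_⟩
    · simpa [hi.2] using h i hi.1
    · simpa [hi.2] using h i hi.1
    · by_cases his : i ∈ s
      · simpa [his] using h.1 i ⟨hi, his⟩
      · simpa [his] using h.2 i ⟨hi, his⟩
  rw [map_apply (measurable_piecewise_prod s) (.pi (Finset.countable_toSet _) fun i _ => hu i),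
    hbox, prod_prod, infinitePi_pi _ fun i _ => hu i, infinitePi_pi _ fun i _ => hu i,
    Finset.prod_inter_mul_prod_sdiff]

open Measure

variable {E : Type*} [NormedAddCommGroup E] [NormedSpace ℝ E] [CompleteSpace E]

theorem MeasureTheory.condExp_piFinset_infinitePi {F : (Π i, X i) → E}
    (hF : Integrable F (infinitePi μ)) :
    (infinitePi μ)[F | Filtration.piFinset s] =ᵐ[infinitePi μ]
      fun x => ∫ y, F (s.piecewise x y) ∂infinitePi μ := by
  set ν := infinitePi μ
  have hP := measurePreserving_piecewise_infinitePi μ s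
  have hFP : Integrable (fun p : (Π i, X i) × (Π i, X i) => F (s.piecewise p.1 p.2)) (ν.prod ν) :=
    (hP.integrable_comp hF.1).mpr hF
  refine (ae_eq_condExp_of_forall_setIntegral_eq (Filtration.piFinset.le s) hF
    (fun t _ _ => hFP.integral_prod_left.integrableOn) ?_ ?_).symm
  · rintro _ ⟨A, hA, rfl⟩ -
    have hpre : (fun p : (Π i, X i) × (Π i, X i) => s.piecewise p.1 p.2) ⁻¹' (s.restrict ⁻¹' A)
        = (s.restrict ⁻¹' A) ×ˢ univ := by
      ext ⟨x, y⟩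
      have : s.restrict (s.piecewise x y) = s.restrict x := by
        ext i; simp
      simp [this]
    calc ∫ x in s.restrict ⁻¹' A, ∫ y, F (s.piecewise x y) ∂ν ∂ν
        = ∫ p in (s.restrict ⁻¹' A) ×ˢ univ, F (s.piecewise p.1 p.2) ∂(ν.prod ν) := by
          rw [setIntegral_prod _ hFP.integrableOn, Measure.restrict_univ]
      _ = ∫ x in s.restrict ⁻¹' A, F x ∂ν := by
          rw [← hpre, ← setIntegral_map (s.measurable_restrict hA) (hP.map_eq ▸ hF.1)
            hP.measurable.aemeasurable, hP.map_eq]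
  · obtain ⟨F', hF', hFF'⟩ := hF.1
    have hdep : (fun x => ∫ y, F' (s.piecewise x y) ∂ν) =
        (fun v => ∫ y, F' (Function.updateFinset y s v) ∂ν) ∘ s.restrict := by
      ext x
      refine integral_congr_ae (ae_of_all _ fun y => congrArg F' ?_)
      ext i
      by_cases hi : i ∈ s <;> simp [Function.updateFinset, hi]
    have hH : StronglyMeasurable fun v : (Π i : s, X i) =>
        ∫ y, F' (Function.updateFinset y s v) ∂ν :=
      (hF'.comp_measurable (measurable_updateFinset'.comp measurable_swap)).integral_prod_right'
    refine ⟨fun x => ∫ y, F' (s.piecewise x y) ∂ν, ?_, ?_⟩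
    · rw [hdep]
      exact hH.comp_measurable (comap_measurable _)
    · filter_upwards [ae_ae_of_ae_prod (hP.quasiMeasurePreserving.ae_eq_comp hFF')] with x hx
      exact integral_congr_ae hx

lemma integral_comp_piecewise_of_map_add {f : (Π i, X i) → E} (hf : Integrable f (infinitePi μ))
    [∀ i, AddZeroClass (X i)] (hadd : ∀ x y, f (x + y) = f x + f y) (x : Π i, X i) :
    ∫ y, f (s.piecewise x y) ∂infinitePi μ =
      f (s.piecewise x 0) + ∫ y, f (s.piecewise 0 y) ∂infinitePi μ := by
  have hslice (x : Π i, X i) : (fun y => f (s.piecewise x y)) =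
      fun y => f (s.piecewise x 0) + f (s.piecewise 0 y) := by
    ext y
    rw [← hadd]
    congr 1
    ext i
    by_cases hi : i ∈ s <;> simp [hi]
  have hslices : ∀ᵐ x ∂infinitePi μ, Integrable (fun y => f (s.piecewise x y)) (infinitePi μ) :=
    ((measurePreserving_piecewise_infinitePi μ s).integrable_comp hf.1 |>.mpr hf).prod_right_ae
  obtain ⟨x₀, hx₀⟩ := hslices.exists
  have htail : Integrable (fun y => f (s.piecewise 0 y)) (infinitePi μ) :=
    integrable_const_add_iff.mp (hslice x₀ ▸ hx₀)
  rw [hslice, integral_add (integrable_const _) htail, integral_const, probReal_univ, one_smul]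

end Piecewise

namespace MeasureTheory.Filtration

variable (X : ℕ → Type*) [∀ n, MeasurableSpace (X n)]

def piLT : Filtration ℕ (MeasurableSpace.pi : MeasurableSpace (Π n, X n)) where
  seq n := piFinset (Finset.range n)
  mono' _ _ h := piFinset.mono (Finset.range_mono h)
  le' _ := piFinset.le _

lemma iSup_piLT : ⨆ n, piLT X n = MeasurableSpace.pi := by
  refine le_antisymm (iSup_le (piLT X).le) (iSup_le fun k => le_iSup_of_le (k + 1) ?_)
  let i : Finset.range (k + 1) := ⟨k, Finset.self_mem_range_succ k⟩
  have : (fun x : Π n, X n => x k) = (fun v => v i) ∘ (Finset.range (k + 1)).restrict := rfl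
  rw [this, ← MeasurableSpace.comap_comp]
  exact MeasurableSpace.comap_mono (measurable_pi_apply i).comap_le

theorem tendsto_ae_condExp_piLT {ν : Measure (Π n, X n)} [IsFiniteMeasure ν]
    {f : (Π n, X n) → ℝ} (hf : Integrable f ν) :
    ∀ᵐ x ∂ν, Tendsto (fun n => ν[f | piLT X n] x) atTop (𝓝 (f x)) := by
  have hlim := MeasureTheory.tendsto_ae_condExp (μ := ν) (ℱ := piLT X) f
  rw [iSup_piLT] at hlim
  filter_upwards [hlim, condExp_of_aestronglyMeasurable' le_rfl hf.1 hf] with x hx hfx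
  rwa [hfx] at hx

end MeasureTheory.Filtration

theorem stmt16_general (m : ℕ → ℕ) (μs : ∀ k, Measure (Fin (m k) → ℝ))
    (hprob : ∀ k, IsProbabilityMeasure (μs k))
    (μ : Measure (∀ k, Fin (m k) → ℝ))
    (hμ : IsProductMeasure μs μ)
    (f : (∀ k, Fin (m k) → ℝ) → ℝ)
    (hadd : ∀ x y, f (x + y) = f x + f y)
    (hf : Integrable f μ)
    (hc : Tendsto (fun n => ∫ y, f (fun k => if k < n then 0 else y k) ∂μ)
      atTop (𝓝 0)) :
    ∀ᵐ x ∂μ, Tendsto (fun n => f (fun k => if k < n then x k else 0))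
      atTop (𝓝 (f x)) := by
  obtain rfl := hμ.eq_infinitePi
  have hcondExp (n : ℕ) :
      (Measure.infinitePi μs)[f | Filtration.piLT _ n] =ᵐ[Measure.infinitePi μs]
        fun x => f (fun k => if k < n then x k else 0) +
          ∫ y, f (fun k => if k < n then 0 else y k) ∂Measure.infinitePi μs := by
    filter_upwards [condExp_piFinset_infinitePi μs (Finset.range n) hf] with x hx
    rw [Filtration.piLT, hx, integral_comp_piecewise_of_map_add μs _ hf hadd x]
    simp only [Finset.range_piecewise, Pi.zero_apply]
  filter_upwards [Filtration.tendsto_ae_condExp_piLT _ hf, ae_all_iff.2 hcondExp] with x hlim hx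
  simpa using (hlim.congr hx).sub hc

/-- Theorem 3: if the tail constants `cₙ = ∫ f(0,…,0,y) d(⨂_{k>n}μ_k)(y)` tend to `0`,
then the finite-dimensional (continuous) linear functionals
`gₙ(x) = f(x₁,…,x_{m̃ₙ},0,…)` converge to `f` μ-a.e. -/
theorem stmt16 (m : ℕ → ℕ) (μs : ∀ k, Measure (Fin (m k) → ℝ))
    (hprob : ∀ k, IsProbabilityMeasure (μs k))
    (μ : Measure (∀ k, Fin (m k) → ℝ)) [IsProbabilityMeasure μ]
    (hμ : IsProductMeasure μs μ)
    (f : (∀ k, Fin (m k) → ℝ) → ℝ)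
    (hadd : ∀ x y, f (x + y) = f x + f y)
    (hsmul : ∀ (c : ℝ) (x), f (c • x) = c * f x)
    (hf : Integrable f μ)
    (hc : Tendsto (fun n => ∫ y, f (fun k => if k < n then 0 else y k) ∂μ)
      atTop (𝓝 0)) :
    ∀ᵐ x ∂μ, Tendsto (fun n => f (fun k => if k < n then x k else 0))
      atTop (𝓝 (f x)) :=
  stmt16_general m μs hprob μ hμ f hadd hf hc
end
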